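/- arXiv:0909.5175 — 2 statements merged into one kernel-verified Lean document; each statement's English description precedes it below -/
import Mathlib

section
/- For every integer d ≥ 1 there exist constants a_d ∈ R and γ_d > 0 such that the following holds for every ε ∈ (0,1) and every multilinear polynomial P of degree at most d on n variables whose variables are ordered so that w_1(P) ≥ w_2(P) ≥ … ≥ w_n(P). Let K = K(P,ε) be the ε-critical index of P. If x^K = (x_1,…,x_K) is chosen uniformly at random from {-1,1}^K, then the restricted polynomial P_{x^K}(Y_{K+1},…,Y_n) := P(x_1,…,x_K,Y_{K+1},…,Y_n), viewed as a multilinear polynomial in the variables Y_{K+1},…,Y_n, is (a_d · ε)-regular with probability at least γ_d. -/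
open Finset MeasureTheory ProbabilityTheory
open scoped Classical

noncomputable section

/-- The ±1 real value of a Boolean bit (`true ↦ 1`, `false ↦ -1`). -/
def pmOne (b : Bool) : ℝ := if b then 1 else -1

/-- Noise sensitivity at rate `δ` of a Boolean function on the hypercube `{-1,1}^n`:
`Pr[f(X) ≠ f(Z)]` where `X` is uniform and `Z` flips each coordinate of `X`
independently with probability `δ`. -/
def noiseSens {n : ℕ} (δ : ℝ) (f : (Fin n → Bool) → Bool) : ℝ :=
  (1 / 2 ^ n : ℝ) * ∑ x : Fin n → Bool, ∑ s : Fin n → Bool,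
    (∏ i, if s i then δ else 1 - δ) * (if f x ≠ f (fun i => xor (s i) (x i)) then 1 else 0)

/-- Influence of the `i`-th variable: `Pr[f(X) ≠ f(X^{(i)})]`. -/
def influence {n : ℕ} (f : (Fin n → Bool) → Bool) (i : Fin n) : ℝ :=
  (1 / 2 ^ n : ℝ) * ∑ x : Fin n → Bool,
    if f x ≠ f (Function.update x i (!x i)) then 1 else 0

/-- Average sensitivity (total influence). -/
def avgSens {n : ℕ} (f : (Fin n → Bool) → Bool) : ℝ := ∑ i, influence f i

/-- `f` is a degree-`d` polynomial threshold function: `f = sign(P)` for some real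
polynomial of total degree at most `d`, with the convention `sign 0 = 1`. -/
def IsPTF {n : ℕ} (d : ℕ) (f : (Fin n → Bool) → Bool) : Prop :=
  ∃ P : MvPolynomial (Fin n) ℝ, P.totalDegree ≤ d ∧
    ∀ x, (f x = true ↔ 0 ≤ MvPolynomial.eval (fun i => pmOne (x i)) P)

/-- Evaluation of the multilinear polynomial with coefficients `a` at the point `x`. -/
def mlEval {n : ℕ} (a : Finset (Fin n) → ℝ) (x : Fin n → ℝ) : ℝ :=
  ∑ I : Finset (Fin n), a I * ∏ i ∈ I, x i

/-- The multilinear polynomial with coefficients `a` has degree at most `d`. -/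
def DegLE {n : ℕ} (a : Finset (Fin n) → ℝ) (d : ℕ) : Prop :=
  ∀ I, a I ≠ 0 → I.card ≤ d

/-- Squared weight `w_i²` of coordinate `i`: `Σ_{I ∋ i} a_I²`. -/
def wsq {n : ℕ} (a : Finset (Fin n) → ℝ) (i : Fin n) : ℝ :=
  ∑ I ∈ univ.filter (fun I : Finset (Fin n) => i ∈ I), a I ^ 2

/-- `ε`-regularity: `Σ_i w_i⁴ ≤ ε² (Σ_i w_i²)²`. -/
def Regular {n : ℕ} (a : Finset (Fin n) → ℝ) (ε : ℝ) : Prop :=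
  ∑ i, wsq a i ^ 2 ≤ ε ^ 2 * (∑ i, wsq a i) ^ 2

/-- `σ_{k+1}²(P) = Σ_{j ≥ k (0-based)} w_j²` (tail weight, `k` restricted variables). -/
def sigmaSq {n : ℕ} (a : Finset (Fin n) → ℝ) (k : ℕ) : ℝ :=
  ∑ j ∈ univ.filter (fun j : Fin n => k ≤ (j : ℕ)), wsq a j

/-- The variables are ordered by decreasing weight. -/
def OrderedWeights {n : ℕ} (a : Finset (Fin n) → ℝ) : Prop :=
  ∀ i j : Fin n, i ≤ j → wsq a j ≤ wsq a i

/-- The `ε`-critical index `K(P,ε)`: least `k` such that `w_j² ≤ ε² σ_{k+1}²` for all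
`j` beyond the first `k` variables. -/
def critIndex {n : ℕ} (a : Finset (Fin n) → ℝ) (ε : ℝ) : ℕ :=
  sInf {k : ℕ | ∀ j : Fin n, k ≤ (j : ℕ) → wsq a j ≤ ε ^ 2 * sigmaSq a k}

/-- Coefficients (in the variables `Y_j`, `j ≥ K`) of the restriction of the multilinear
polynomial `a` obtained by fixing the first `K` variables to `x`. -/
def restCoeff {n : ℕ} (a : Finset (Fin n) → ℝ) (K : ℕ) (x : Fin n → ℝ)
    (J : Finset (Fin n)) : ℝ :=
  if ∀ j ∈ J, K ≤ (j : ℕ) then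
    ∑ I ∈ univ.filter (fun I : Finset (Fin n) => I.filter (fun i => K ≤ i.val) = J),
      a I * ∏ i ∈ I.filter (fun i => i.val < K), x i
  else 0

/-- Standard Gaussian measure on `ℝ^n`. -/
def gaussn (n : ℕ) : Measure (Fin n → ℝ) := Measure.pi fun _ => gaussianReal 0 1

/-- Gaussian noise sensitivity: `Pr[f(X) ≠ f((1-δ)X + √(2δ-δ²)Y)]` for independent
standard Gaussian vectors `X, Y`. -/
def gns (n : ℕ) (δ : ℝ) (f : (Fin n → ℝ) → ℝ) : ℝ :=
  (((gaussn n).prod (gaussn n))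
    {p | f p.1 ≠ f (fun i => (1 - δ) * p.1 i + Real.sqrt (2 * δ - δ ^ 2) * p.2 i)}).toReal

/-- Normalized probabilists' Hermite polynomial `H_k(x)`. -/
def normHermite (k : ℕ) (x : ℝ) : ℝ :=
  Polynomial.aeval x (Polynomial.hermite k) / Real.sqrt (Nat.factorial k)

/-!
Let `P_x` be the restriction at `x`, and put `S(x) = Σ_j w_j²(P_x)`, `T(x) = Σ_j w_j⁴(P_x)`,
`σ² = σ_{K+1}²(P)`. As a function of `x`, each coefficient of `P_x` is a multilinear polynomial
of degree `≤ d` whose squared coefficients add up to the part of `Σ_I a_I²` it collects. Parseval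
gives `𝔼 S = σ²`; Bonami's lemma `𝔼 f⁴ ≤ 9^d (𝔼 f²)²`, combined with Cauchy–Schwarz over pairs
of coefficients, gives `𝔼 S² ≤ 9^d σ⁴` and `𝔼 T ≤ 9^d Σ_{j>K} w_j⁴ ≤ 9^d ε² σ⁴`, the last step
being the defining property of the critical index. By Paley–Zygmund `S ≥ σ²/2` with probability
at least `1/(4·9^d)`, and by Markov `T ≤ 8·81^d ε² σ⁴` fails with probability at most
`1/(8·9^d)`. Where both hold, `T ≤ (6·9^d ε)² S²`, i.e. `P_x` is `6·9^d ε`-regular.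
-/

lemma sum_sq_mul_sq_le_of_sum_pow_four_le {α : Type*} (s : Finset α) {f g : α → ℝ}
    {M p q : ℝ} (hM : 0 ≤ M) (hp : 0 ≤ p) (hq : 0 ≤ q)
    (hf : ∑ x ∈ s, f x ^ 4 ≤ M * p ^ 2) (hg : ∑ x ∈ s, g x ^ 4 ≤ M * q ^ 2) :
    ∑ x ∈ s, f x ^ 2 * g x ^ 2 ≤ M * (p * q) := by
  refine (pow_le_pow_iff_left₀ (by positivity) (by positivity) two_ne_zero).1 ?_
  have hCS := sum_mul_sq_le_sq_mul_sq s (f · ^ 2) (g · ^ 2)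
  simp only [← pow_mul] at hCS
  calc (∑ x ∈ s, f x ^ 2 * g x ^ 2) ^ 2 ≤ (∑ x ∈ s, f x ^ 4) * ∑ x ∈ s, g x ^ 4 := hCS
    _ ≤ (M * p ^ 2) * (M * q ^ 2) := mul_le_mul hf hg (by positivity) (by positivity)
    _ = (M * (p * q)) ^ 2 := by ring

lemma sum_mul_sum_le_of_forall_le {ι α : Type*} (s : Finset α) (A B : Finset ι)
    (f : ι → α → ℝ) (c : ι → ℝ) (M : ℝ)
    (h : ∀ j ∈ A, ∀ j' ∈ B, ∑ x ∈ s, f j x * f j' x ≤ M * (c j * c j')) :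
    ∑ x ∈ s, (∑ j ∈ A, f j x) * (∑ j' ∈ B, f j' x) ≤
      M * ((∑ j ∈ A, c j) * ∑ j' ∈ B, c j') := by
  calc ∑ x ∈ s, (∑ j ∈ A, f j x) * (∑ j' ∈ B, f j' x)
      = ∑ j ∈ A, ∑ j' ∈ B, ∑ x ∈ s, f j x * f j' x := by
        simp_rw [sum_mul_sum]
        rw [sum_comm]
        exact sum_congr rfl fun _ _ => sum_comm
    _ ≤ ∑ j ∈ A, ∑ j' ∈ B, M * (c j * c j') :=
        sum_le_sum fun j hj => sum_le_sum fun j' hj' => h j hj j' hj'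
    _ = M * ((∑ j ∈ A, c j) * ∑ j' ∈ B, c j') := by
        rw [sum_mul_sum, mul_sum]
        exact sum_congr rfl fun _ _ => (mul_sum _ _ _).symm

section Counting

variable {α : Type*} (s : Finset α)

/-- Paley–Zygmund inequality, in counting form. -/
lemma card_div_le_card_filter_half_le {S : α → ℝ} {C m : ℝ} (hC : 0 < C) (hm : 0 < m)
    (h1 : #s * m ≤ ∑ x ∈ s, S x) (h2 : ∑ x ∈ s, S x ^ 2 ≤ C * #s * m ^ 2) :
    (#s : ℝ) / (4 * C) ≤ #{x ∈ s | m / 2 ≤ S x} := by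
  set A := {x ∈ s | m / 2 ≤ S x}
  have hrest : ∑ x ∈ s with ¬ m / 2 ≤ S x, S x ≤ #s * (m / 2) :=
    calc ∑ x ∈ s with ¬ m / 2 ≤ S x, S x ≤ ∑ x ∈ s with ¬ m / 2 ≤ S x, m / 2 :=
          sum_le_sum fun x hx => (not_le.1 (mem_filter.1 hx).2).le
      _ ≤ #s * (m / 2) := by
          rw [sum_const, nsmul_eq_mul]
          gcongr
          exact filter_subset _ _
  have hA : #s * m / 2 ≤ ∑ x ∈ A, S x := by
    have := sum_filter_add_sum_filter_not s (fun x => m / 2 ≤ S x) S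
    linarith
  have hAsq : ∑ x ∈ A, S x ^ 2 ≤ C * #s * m ^ 2 :=
    (sum_le_sum_of_subset_of_nonneg (filter_subset _ _) fun _ _ _ => sq_nonneg _).trans h2
  have hkey : (#s * m / 2) ^ 2 ≤ #A * (C * #s * m ^ 2) :=
    calc (#s * m / 2) ^ 2 ≤ (∑ x ∈ A, S x) ^ 2 := pow_le_pow_left₀ (by positivity) hA 2
      _ ≤ #A * ∑ x ∈ A, S x ^ 2 := sq_sum_le_card_mul_sum_sq
      _ ≤ #A * (C * #s * m ^ 2) := by gcongr
  rw [div_le_iff₀ (by positivity)]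
  rcases (Nat.cast_nonneg (α := ℝ) #s).eq_or_lt with hs | hs
  · rw [← hs]; positivity
  · nlinarith [mul_pos hs (pow_pos hm 2)]

/-- Markov's inequality, in counting form. -/
lemma card_filter_lt_mul_le {T : α → ℝ} (hT : ∀ x ∈ s, 0 ≤ T x) (t : ℝ) :
    #{x ∈ s | t < T x} * t ≤ ∑ x ∈ s, T x := by
  calc #{x ∈ s | t < T x} * t ≤ ∑ x ∈ s with t < T x, T x := by
        rw [← nsmul_eq_mul]
        exact card_nsmul_le_sum _ _ _ fun x hx => (mem_filter.1 hx).2.le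
    _ ≤ ∑ x ∈ s, T x :=
        sum_le_sum_of_subset_of_nonneg (filter_subset _ _) fun x hx _ => hT x hx

lemma card_div_le_card_filter_le_mul_sq {S T : α → ℝ} {C δ m : ℝ} (hC : 1 ≤ C) (hδ : 0 < δ)
    (hm : 0 ≤ m) (hT : ∀ x ∈ s, 0 ≤ T x) (h1 : ∑ x ∈ s, S x = #s * m)
    (h2 : ∑ x ∈ s, S x ^ 2 ≤ C * #s * m ^ 2) (h3 : ∑ x ∈ s, T x ≤ C * δ * #s * m ^ 2) :
    (#s : ℝ) / (8 * C) ≤ #{x ∈ s | T x ≤ 32 * C ^ 2 * δ * S x ^ 2} := by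
  rcases hm.eq_or_lt with rfl | hm
  · have hT0 : ∀ x ∈ s, T x = 0 :=
      (sum_eq_zero_iff_of_nonneg hT).1 (le_antisymm (by simpa using h3) (sum_nonneg hT))
    rw [filter_true_of_mem fun x hx => by rw [hT0 x hx]; positivity, div_le_iff₀ (by positivity)]
    nlinarith [(Nat.cast_nonneg (α := ℝ) #s)]
  have hPZ := card_div_le_card_filter_half_le s (by positivity) hm h1.ge h2
  have hMarkov := card_filter_lt_mul_le s hT (8 * C ^ 2 * δ * m ^ 2)
  have hsub : {x ∈ s | m / 2 ≤ S x} ⊆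
      {x ∈ s | T x ≤ 32 * C ^ 2 * δ * S x ^ 2} ∪ {x ∈ s | 8 * C ^ 2 * δ * m ^ 2 < T x} := by
    intro x hx
    rw [mem_filter] at hx
    rw [mem_union, mem_filter, mem_filter]
    refine (le_or_gt (T x) (8 * C ^ 2 * δ * m ^ 2)).imp (fun hTx => ⟨hx.1, ?_⟩) (⟨hx.1, ·⟩)
    have : m ^ 2 ≤ 4 * S x ^ 2 := by nlinarith [hx.2]
    nlinarith [mul_le_mul_of_nonneg_left this (by positivity : (0 : ℝ) ≤ 8 * C ^ 2 * δ)]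
  have hcard := (card_le_card hsub).trans (card_union_le _ _)
  have hBc : (#{x ∈ s | 8 * C ^ 2 * δ * m ^ 2 < T x} : ℝ) ≤ #s / (8 * C) := by
    rw [le_div_iff₀ (by positivity)]
    nlinarith [mul_pos (mul_pos (by positivity : (0 : ℝ) < C) hδ) (pow_pos hm 2)]
  have : (#s : ℝ) / (4 * C) = 2 * (#s / (8 * C)) := by field_simp; ring
  have hcard' : (#{x ∈ s | m / 2 ≤ S x} : ℝ) ≤ #{x ∈ s | T x ≤ 32 * C ^ 2 * δ * S x ^ 2} +
      #{x ∈ s | 8 * C ^ 2 * δ * m ^ 2 < T x} := by exact_mod_cast hcard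
  linarith

end Counting

lemma pmOne_not (b : Bool) : pmOne (!b) = -pmOne b := by cases b <;> simp [pmOne]

section CubeFourier

variable {n : ℕ}

def coeffNormSq (β : Finset (Fin n) → ℝ) : ℝ := ∑ S, β S ^ 2

lemma coeffNormSq_nonneg (β : Finset (Fin n) → ℝ) : 0 ≤ coeffNormSq β :=
  sum_nonneg fun _ _ => sq_nonneg _

def coeffErase (i : Fin n) (β : Finset (Fin n) → ℝ) (S : Finset (Fin n)) : ℝ :=
  if i ∉ S then β S else 0

def coeffDeriv (i : Fin n) (β : Finset (Fin n) → ℝ) (S : Finset (Fin n)) : ℝ :=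
  if i ∉ S then β (insert i S) else 0

lemma sum_finset_eq_sum_notMem_add {M : Type*} [AddCommMonoid M] (i : Fin n)
    (F : Finset (Fin n) → M) :
    ∑ S, F S = ∑ S with i ∉ S, F S + ∑ S with i ∉ S, F (insert i S) := by
  have hfilter : ({S | i ∉ S} : Finset (Finset (Fin n))) = (univ.erase i).powerset := by
    ext S; simp [subset_erase]
  rw [hfilter, ← sum_powerset_insert (notMem_erase i univ), insert_erase (mem_univ i),
    powerset_univ]

lemma mlEval_eq_coeffErase_add (i : Fin n) (β : Finset (Fin n) → ℝ) (y : Fin n → ℝ) :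
    mlEval β y = mlEval (coeffErase i β) y + y i * mlEval (coeffDeriv i β) y := by
  simp only [mlEval, coeffErase, coeffDeriv, ite_mul, zero_mul, ← sum_filter, mul_sum]
  rw [sum_finset_eq_sum_notMem_add i]
  congr 1
  refine sum_congr rfl fun S hS => ?_
  rw [prod_insert (mem_filter.1 hS).2]
  ring

lemma coeffNormSq_eq_coeffErase_add (i : Fin n) (β : Finset (Fin n) → ℝ) :
    coeffNormSq β = coeffNormSq (coeffErase i β) + coeffNormSq (coeffDeriv i β) := by
  simp only [coeffNormSq, coeffErase, coeffDeriv, ite_pow, zero_pow two_ne_zero, ← sum_filter]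
  exact sum_finset_eq_sum_notMem_add i _

lemma coeffErase_of_mem {i : Fin n} {S : Finset (Fin n)} (β : Finset (Fin n) → ℝ) (h : i ∈ S) :
    coeffErase i β S = 0 := if_neg (not_not.2 h)

lemma coeffDeriv_of_mem {i : Fin n} {S : Finset (Fin n)} (β : Finset (Fin n) → ℝ) (h : i ∈ S) :
    coeffDeriv i β S = 0 := if_neg (not_not.2 h)

lemma mlEval_update_of_coeff_mem_eq_zero {i : Fin n} {β : Finset (Fin n) → ℝ}
    (hβ : ∀ S, i ∈ S → β S = 0) (y : Fin n → ℝ) (c : ℝ) :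
    mlEval β (Function.update y i c) = mlEval β y := by
  refine sum_congr rfl fun S _ => ?_
  by_cases hS : i ∈ S
  · simp [hβ S hS]
  · congr 1
    exact prod_congr rfl fun j hj => Function.update_of_ne (ne_of_mem_of_not_mem hj hS) _ _

lemma sum_comp_update_not (i : Fin n) (φ : (Fin n → Bool) → ℝ) :
    ∑ x, φ (Function.update x i (!x i)) = ∑ x, φ x := by
  have hflip : Function.Involutive fun x : Fin n → Bool => Function.update x i (!x i) := by
    intro x; simp
  exact Fintype.sum_bijective _ hflip.bijective _ _ fun _ => rfl

/-- Write `f = g + xᵢ h` with `g`, `h` independent of `xᵢ`; pairing each `x` with its flip in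
coordinate `i` turns `φ ∘ f` into `φ (g + h) + φ (g - h)`. -/
lemma two_mul_sum_comp_mlEval (i : Fin n) (β : Finset (Fin n) → ℝ) (φ : ℝ → ℝ) :
    2 * ∑ x : Fin n → Bool, φ (mlEval β (pmOne ∘ x)) =
      ∑ x : Fin n → Bool, (φ (mlEval (coeffErase i β) (pmOne ∘ x) +
          mlEval (coeffDeriv i β) (pmOne ∘ x)) +
        φ (mlEval (coeffErase i β) (pmOne ∘ x) - mlEval (coeffDeriv i β) (pmOne ∘ x))) := by
  rw [two_mul]
  nth_rewrite 2 [← sum_comp_update_not i]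
  rw [← sum_add_distrib]
  refine sum_congr rfl fun x _ => ?_
  simp only [Function.comp_update, mlEval_eq_coeffErase_add i β (Function.update _ i _),
    mlEval_update_of_coeff_mem_eq_zero (fun S => coeffErase_of_mem β),
    mlEval_update_of_coeff_mem_eq_zero (fun S => coeffDeriv_of_mem β),
    Function.update_self, pmOne_not, mlEval_eq_coeffErase_add i β (pmOne ∘ x),
    Function.comp_apply]
  cases x i
  · simp only [pmOne, Bool.false_eq_true, if_false, neg_neg, neg_one_mul, one_mul, ← sub_eq_add_neg]
    exact add_comm _ _
  · simp only [pmOne, if_true, one_mul, neg_mul, ← sub_eq_add_neg]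

def CoeffSupportedIn (β : Finset (Fin n) → ℝ) (s : Finset (Fin n)) : Prop :=
  ∀ S, β S ≠ 0 → S ⊆ s

lemma coeffSupportedIn_univ (β : Finset (Fin n) → ℝ) : CoeffSupportedIn β univ :=
  fun S _ => subset_univ S

namespace CoeffSupportedIn

variable {β : Finset (Fin n) → ℝ} {i : Fin n} {t : Finset (Fin n)}

lemma coeffErase (h : CoeffSupportedIn β (insert i t)) : CoeffSupportedIn (coeffErase i β) t := by
  intro S hS
  by_cases hi : i ∈ S
  · exact absurd (coeffErase_of_mem β hi) hS
  · rw [_root_.coeffErase, if_pos hi] at hS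
    exact (subset_insert_iff_of_notMem hi).1 (h S hS)

lemma coeffDeriv (h : CoeffSupportedIn β (insert i t)) : CoeffSupportedIn (coeffDeriv i β) t := by
  intro S hS
  by_cases hi : i ∈ S
  · exact absurd (coeffDeriv_of_mem β hi) hS
  · rw [_root_.coeffDeriv, if_pos hi] at hS
    exact (subset_insert_iff_of_notMem hi).1 ((subset_insert i S).trans (h _ hS))

lemma mlEval_eq (h : CoeffSupportedIn β ∅) (y : Fin n → ℝ) : mlEval β y = β ∅ := by
  rw [mlEval, sum_eq_single ∅]
  · simp
  · intro S _ hS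
    rw [not_imp_comm.1 (h S) (subset_empty.not.2 hS), zero_mul]
  · simp

lemma coeffNormSq_eq (h : CoeffSupportedIn β ∅) : coeffNormSq β = β ∅ ^ 2 := by
  rw [coeffNormSq, sum_eq_single ∅]
  · intro S _ hS
    rw [not_imp_comm.1 (h S) (subset_empty.not.2 hS), zero_pow two_ne_zero]
  · simp

lemma sum_mlEval_pow_four_le (h : CoeffSupportedIn β ∅) (d : ℕ) :
    ∑ x : Fin n → Bool, mlEval β (pmOne ∘ x) ^ 4 ≤ 2 ^ n * 9 ^ d * coeffNormSq β ^ 2 := by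
  simp only [h.mlEval_eq, h.coeffNormSq_eq, sum_const, card_univ, Fintype.card_fun,
    Fintype.card_bool, Fintype.card_fin, nsmul_eq_mul, Nat.cast_pow, Nat.cast_ofNat]
  calc 2 ^ n * β ∅ ^ 4 = 2 ^ n * 1 * (β ∅ ^ 2) ^ 2 := by ring
    _ ≤ 2 ^ n * 9 ^ d * (β ∅ ^ 2) ^ 2 := by gcongr; exact one_le_pow₀ (by norm_num)

end CoeffSupportedIn

lemma DegLE.coeffErase {β : Finset (Fin n) → ℝ} {d : ℕ} (h : DegLE β d) (i : Fin n) :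
    DegLE (coeffErase i β) d := by
  intro S hS
  by_cases hi : i ∈ S
  · exact absurd (coeffErase_of_mem β hi) hS
  · rw [_root_.coeffErase, if_pos hi] at hS
    exact h S hS

lemma DegLE.coeffDeriv {β : Finset (Fin n) → ℝ} {d : ℕ} (h : DegLE β (d + 1)) (i : Fin n) :
    DegLE (coeffDeriv i β) d := by
  intro S hS
  by_cases hi : i ∈ S
  · exact absurd (coeffDeriv_of_mem β hi) hS
  · rw [_root_.coeffDeriv, if_pos hi] at hS
    have := h _ hS
    rw [card_insert_of_notMem hi] at this
    omega

lemma DegLE.coeffSupportedIn_empty {β : Finset (Fin n) → ℝ} (h : DegLE β 0) :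
    CoeffSupportedIn β ∅ :=
  fun S hS => (card_eq_zero.1 (Nat.le_zero.1 (h S hS))).le

lemma sum_mlEval_sq_eq_of_coeffSupportedIn {β : Finset (Fin n) → ℝ} {s : Finset (Fin n)}
    (hβ : CoeffSupportedIn β s) :
    ∑ x : Fin n → Bool, mlEval β (pmOne ∘ x) ^ 2 = 2 ^ n * coeffNormSq β := by
  induction s using Finset.induction_on generalizing β with
  | empty => simp [hβ.mlEval_eq, hβ.coeffNormSq_eq]
  | insert i t _ ih =>
    have h := two_mul_sum_comp_mlEval i β (· ^ 2)
    have hpt : ∀ g h : ℝ, (g + h) ^ 2 + (g - h) ^ 2 = 2 * (g ^ 2 + h ^ 2) := fun _ _ => by ring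
    simp only [hpt, ← mul_sum] at h
    rw [coeffNormSq_eq_coeffErase_add i, mul_add, ← ih hβ.coeffErase, ← ih hβ.coeffDeriv,
      ← sum_add_distrib]
    linarith

lemma sum_mlEval_sq (β : Finset (Fin n) → ℝ) :
    ∑ x : Fin n → Bool, mlEval β (pmOne ∘ x) ^ 2 = 2 ^ n * coeffNormSq β :=
  sum_mlEval_sq_eq_of_coeffSupportedIn (coeffSupportedIn_univ β)

lemma sum_mlEval_pow_four_le_of_coeffSupportedIn {β : Finset (Fin n) → ℝ} {s : Finset (Fin n)}
    {d : ℕ} (hβ : CoeffSupportedIn β s) (hd : DegLE β d) :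
    ∑ x : Fin n → Bool, mlEval β (pmOne ∘ x) ^ 4 ≤ 2 ^ n * 9 ^ d * coeffNormSq β ^ 2 := by
  induction s using Finset.induction_on generalizing β d with
  | empty => exact hβ.sum_mlEval_pow_four_le d
  | insert i t _ ih =>
    cases d with
    | zero => exact hd.coeffSupportedIn_empty.sum_mlEval_pow_four_le 0
    | succ D =>
      set G := fun x : Fin n → Bool => mlEval (coeffErase i β) (pmOne ∘ x)
      set H := fun x : Fin n → Bool => mlEval (coeffDeriv i β) (pmOne ∘ x)
      have hsplit : ∑ x, mlEval β (pmOne ∘ x) ^ 4 =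
          ∑ x, G x ^ 4 + 6 * ∑ x, G x ^ 2 * H x ^ 2 + ∑ x, H x ^ 4 := by
        have h := two_mul_sum_comp_mlEval i β (· ^ 4)
        have hpt : ∀ g h : ℝ,
            (g + h) ^ 4 + (g - h) ^ 4 = 2 * (g ^ 4 + 6 * (g ^ 2 * h ^ 2) + h ^ 4) :=
          fun _ _ => by ring
        simp only [hpt, ← mul_sum, sum_add_distrib] at h
        linarith
      rw [hsplit, coeffNormSq_eq_coeffErase_add i]
      set p := coeffNormSq (coeffErase i β)
      set q := coeffNormSq (coeffDeriv i β)
      have hA : ∑ x, G x ^ 4 ≤ 2 ^ n * 9 ^ (D + 1) * p ^ 2 := ih hβ.coeffErase (hd.coeffErase i)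
      have hB : ∑ x, H x ^ 4 ≤ 2 ^ n * 9 ^ D * q ^ 2 := ih hβ.coeffDeriv (hd.coeffDeriv i)
      have hp : 0 ≤ p := coeffNormSq_nonneg _
      have hq : 0 ≤ q := coeffNormSq_nonneg _
      have hu : (0 : ℝ) ≤ 2 ^ n * 9 ^ D := by positivity
      -- the cross term costs `6 · 3 · 9^D = 2 · 9^(D+1)`, the middle term of `9^(D+1) (p + q)²`
      have hC : ∑ x, G x ^ 2 * H x ^ 2 ≤ 2 ^ n * 9 ^ D * (3 * p * q) :=
        sum_sq_mul_sq_le_of_sum_pow_four_le univ hu (by positivity) hq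
          (hA.trans_eq (by ring)) hB
      rw [pow_succ] at hA ⊢
      nlinarith [mul_nonneg hu (sq_nonneg q)]

/-- Bonami's lemma. -/
lemma sum_mlEval_pow_four_le {β : Finset (Fin n) → ℝ} {d : ℕ} (hd : DegLE β d) :
    ∑ x : Fin n → Bool, mlEval β (pmOne ∘ x) ^ 4 ≤ 2 ^ n * 9 ^ d * coeffNormSq β ^ 2 :=
  sum_mlEval_pow_four_le_of_coeffSupportedIn (coeffSupportedIn_univ β) hd

end CubeFourier

section Restriction

variable {n : ℕ}

def tailFiber (K : ℕ) (J : Finset (Fin n)) : Finset (Finset (Fin n)) :=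
  univ.filter fun I : Finset (Fin n) => I.filter (fun i => K ≤ i.val) = J

lemma eq_union_of_mem_tailFiber {K : ℕ} {I J : Finset (Fin n)} (h : I ∈ tailFiber K J) :
    I = I.filter (fun i => i.val < K) ∪ J := by
  rw [tailFiber, mem_filter] at h
  rw [← h.2, filter_union_right]
  exact (filter_true_of_mem (s := I) fun i _ => lt_or_ge (i : ℕ) K).symm

/-- Coefficients, as a multilinear polynomial in the first `K` variables, of the coefficient
at `Y^J` of the restriction. -/
def restPoly (a : Finset (Fin n) → ℝ) (K : ℕ) (J : Finset (Fin n)) (H : Finset (Fin n)) : ℝ :=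
  ∑ I ∈ tailFiber K J with I.filter (fun i => i.val < K) = H, a I

def fiberMass (a : Finset (Fin n) → ℝ) (K : ℕ) (J : Finset (Fin n)) : ℝ :=
  ∑ I ∈ tailFiber K J, a I ^ 2

lemma fiberMass_nonneg (a : Finset (Fin n) → ℝ) (K : ℕ) (J : Finset (Fin n)) :
    0 ≤ fiberMass a K J :=
  sum_nonneg fun _ _ => sq_nonneg _

lemma restCoeff_eq_mlEval (a : Finset (Fin n) → ℝ) (K : ℕ) (y : Fin n → ℝ)
    (J : Finset (Fin n)) : restCoeff a K y J = mlEval (restPoly a K J) y := by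
  have hfib : mlEval (restPoly a K J) y =
      ∑ I ∈ tailFiber K J, a I * ∏ i ∈ I.filter (fun i => i.val < K), y i := by
    rw [← sum_fiberwise _ (fun I => I.filter (fun i => i.val < K))]
    refine sum_congr rfl fun H _ => ?_
    rw [restPoly, sum_mul]
    exact sum_congr rfl fun I hI => by rw [(mem_filter.1 hI).2]
  rw [hfib, restCoeff]
  split_ifs with hJ
  · rfl
  · refine (sum_eq_zero fun I hI => absurd (fun j hj => ?_) hJ).symm
    rw [tailFiber, mem_filter] at hI
    rw [← hI.2] at hj
    exact (mem_filter.1 hj).2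

lemma coeffNormSq_restPoly (a : Finset (Fin n) → ℝ) (K : ℕ) (J : Finset (Fin n)) :
    coeffNormSq (restPoly a K J) = fiberMass a K J := by
  rw [fiberMass, ← sum_fiberwise _ (fun I => I.filter (fun i => i.val < K))]
  refine sum_congr rfl fun H _ => ?_
  -- the head `H` and the tail `J` determine `I = H ∪ J`
  have hsub : (tailFiber K J).filter (fun I => I.filter (fun i => i.val < K) = H) ⊆ {H ∪ J} := by
    intro I hI
    rw [mem_filter] at hI
    rw [mem_singleton, eq_union_of_mem_tailFiber hI.1, hI.2]
  rw [restPoly]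
  rcases subset_singleton_iff.1 hsub with h | h <;> simp [h]

lemma DegLE.restPoly {a : Finset (Fin n) → ℝ} {d : ℕ} (hd : DegLE a d) (K : ℕ)
    (J : Finset (Fin n)) : DegLE (restPoly a K J) d := by
  intro H hH
  obtain ⟨I, hI, haI⟩ := exists_ne_zero_of_sum_ne_zero hH
  rw [← (mem_filter.1 hI).2]
  exact (card_filter_le _ _).trans (hd I haI)

def boolRestrict (a : Finset (Fin n) → ℝ) (K : ℕ) (x : Fin n → Bool) : Finset (Fin n) → ℝ :=
  restCoeff a K (pmOne ∘ x)

lemma sum_boolRestrict_sq (a : Finset (Fin n) → ℝ) (K : ℕ) (J : Finset (Fin n)) :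
    ∑ x : Fin n → Bool, boolRestrict a K x J ^ 2 = 2 ^ n * fiberMass a K J := by
  simp only [boolRestrict, restCoeff_eq_mlEval, sum_mlEval_sq, coeffNormSq_restPoly]

lemma sum_boolRestrict_pow_four_le {a : Finset (Fin n) → ℝ} {d : ℕ} (hd : DegLE a d) (K : ℕ)
    (J : Finset (Fin n)) :
    ∑ x : Fin n → Bool, boolRestrict a K x J ^ 4 ≤ 2 ^ n * 9 ^ d * fiberMass a K J ^ 2 := by
  simpa only [boolRestrict, restCoeff_eq_mlEval, coeffNormSq_restPoly]
    using sum_mlEval_pow_four_le (hd.restPoly K J)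

lemma wsq_nonneg (b : Finset (Fin n) → ℝ) (j : Fin n) : 0 ≤ wsq b j :=
  sum_nonneg fun _ _ => sq_nonneg _

lemma sigmaSq_nonneg (a : Finset (Fin n) → ℝ) (K : ℕ) : 0 ≤ sigmaSq a K :=
  sum_nonneg fun j _ => wsq_nonneg a j

def restWeight (a : Finset (Fin n) → ℝ) (K : ℕ) (j : Fin n) : ℝ :=
  ∑ J ∈ univ.filter (fun J : Finset (Fin n) => j ∈ J), fiberMass a K J

lemma restWeight_eq (a : Finset (Fin n) → ℝ) (K : ℕ) (j : Fin n) :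
    restWeight a K j = if K ≤ (j : ℕ) then wsq a j else 0 := by
  rw [restWeight]
  simp only [fiberMass, tailFiber]
  rw [sum_fiberwise_eq_sum_filter, wsq]
  split_ifs with hj
  · congr 1
    ext I
    simp [hj]
  · refine sum_eq_zero fun I hI => absurd ?_ hj
    simp only [mem_filter] at hI
    exact hI.2.2.2

lemma sum_restWeight (a : Finset (Fin n) → ℝ) (K : ℕ) :
    ∑ j, restWeight a K j = sigmaSq a K := by
  simp only [restWeight_eq, sigmaSq, sum_filter]

lemma sum_wsq_boolRestrict (a : Finset (Fin n) → ℝ) (K : ℕ) (j : Fin n) :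
    ∑ x : Fin n → Bool, wsq (boolRestrict a K x) j = 2 ^ n * restWeight a K j := by
  simp only [wsq]
  rw [sum_comm, restWeight, mul_sum]
  exact sum_congr rfl fun J _ => sum_boolRestrict_sq a K J

lemma sum_wsq_boolRestrict_mul_le {a : Finset (Fin n) → ℝ} {d : ℕ} (hd : DegLE a d) (K : ℕ)
    (j j' : Fin n) :
    ∑ x : Fin n → Bool, wsq (boolRestrict a K x) j * wsq (boolRestrict a K x) j' ≤
      2 ^ n * 9 ^ d * (restWeight a K j * restWeight a K j') :=
  sum_mul_sum_le_of_forall_le univ _ _ (fun J x => boolRestrict a K x J ^ 2) (fiberMass a K) _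
    fun J _ J' _ => sum_sq_mul_sq_le_of_sum_pow_four_le univ (by positivity)
      (fiberMass_nonneg a K J) (fiberMass_nonneg a K J') (sum_boolRestrict_pow_four_le hd K J)
      (sum_boolRestrict_pow_four_le hd K J')

lemma sum_sum_wsq_boolRestrict (a : Finset (Fin n) → ℝ) (K : ℕ) :
    ∑ x : Fin n → Bool, ∑ j, wsq (boolRestrict a K x) j = 2 ^ n * sigmaSq a K := by
  rw [sum_comm, ← sum_restWeight, mul_sum]
  exact sum_congr rfl fun j _ => sum_wsq_boolRestrict a K j

lemma sum_sq_sum_wsq_boolRestrict_le {a : Finset (Fin n) → ℝ} {d : ℕ} (hd : DegLE a d)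
    (K : ℕ) :
    ∑ x : Fin n → Bool, (∑ j, wsq (boolRestrict a K x) j) ^ 2 ≤
      2 ^ n * 9 ^ d * sigmaSq a K ^ 2 := by
  simpa only [sq, sum_restWeight] using sum_mul_sum_le_of_forall_le univ univ univ
    (fun j x => wsq (boolRestrict a K x) j) (restWeight a K) _
    fun j _ j' _ => sum_wsq_boolRestrict_mul_le hd K j j'

lemma sum_sum_wsq_sq_boolRestrict_le {a : Finset (Fin n) → ℝ} {d : ℕ} (hd : DegLE a d)
    {K : ℕ} {ε : ℝ} (hK : ∀ j : Fin n, K ≤ (j : ℕ) → wsq a j ≤ ε ^ 2 * sigmaSq a K) :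
    ∑ x : Fin n → Bool, ∑ j, wsq (boolRestrict a K x) j ^ 2 ≤
      2 ^ n * 9 ^ d * (ε ^ 2 * sigmaSq a K ^ 2) := by
  have hweight : ∀ j, restWeight a K j ≤ ε ^ 2 * sigmaSq a K := fun j => by
    rw [restWeight_eq]
    split_ifs with hj
    · exact hK j hj
    · exact mul_nonneg (sq_nonneg ε) (sigmaSq_nonneg a K)
  have hrw : ∀ j, 0 ≤ restWeight a K j := fun j => by
    rw [restWeight_eq]; split_ifs <;> simp [wsq_nonneg]
  calc ∑ x : Fin n → Bool, ∑ j, wsq (boolRestrict a K x) j ^ 2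
      = ∑ j, ∑ x : Fin n → Bool, wsq (boolRestrict a K x) j * wsq (boolRestrict a K x) j := by
        rw [sum_comm]; simp only [sq]
    _ ≤ ∑ j, 2 ^ n * 9 ^ d * (restWeight a K j * restWeight a K j) :=
        sum_le_sum fun j _ => sum_wsq_boolRestrict_mul_le hd K j j
    _ ≤ ∑ j, 2 ^ n * 9 ^ d * (ε ^ 2 * sigmaSq a K * restWeight a K j) :=
        sum_le_sum fun j _ => by gcongr; exacts [hrw j, hweight j]
    _ = 2 ^ n * 9 ^ d * (ε ^ 2 * sigmaSq a K ^ 2) := by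
        rw [← mul_sum, ← mul_sum, sum_restWeight]; ring

end Restriction

lemma critIndex_spec {n : ℕ} (a : Finset (Fin n) → ℝ) (ε : ℝ) :
    ∀ j : Fin n, critIndex a ε ≤ (j : ℕ) → wsq a j ≤ ε ^ 2 * sigmaSq a (critIndex a ε) :=
  Nat.sInf_mem (s := {k : ℕ | ∀ j : Fin n, k ≤ (j : ℕ) → wsq a j ≤ ε ^ 2 * sigmaSq a k})
    ⟨n, fun j hj => absurd j.isLt hj.not_gt⟩

lemma card_div_le_card_filter_regular_boolRestrict {n d K : ℕ} {a : Finset (Fin n) → ℝ}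
    {ε : ℝ} (hd : DegLE a d) (hε : 0 < ε)
    (hK : ∀ j : Fin n, K ≤ (j : ℕ) → wsq a j ≤ ε ^ 2 * sigmaSq a K) :
    (2 ^ n : ℝ) / (8 * 9 ^ d) ≤ #{x | Regular (boolRestrict a K x) (6 * 9 ^ d * ε)} := by
  have hcard : (#(univ : Finset (Fin n → Bool)) : ℝ) = 2 ^ n := by simp
  have h := card_div_le_card_filter_le_mul_sq univ (S := fun x => ∑ j, wsq (boolRestrict a K x) j)
    (T := fun x => ∑ j, wsq (boolRestrict a K x) j ^ 2) (one_le_pow₀ (by norm_num : (1 : ℝ) ≤ 9))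
    (pow_pos hε 2) (sigmaSq_nonneg a K) (fun x _ => sum_nonneg fun j _ => sq_nonneg _)
    (by rw [hcard]; exact sum_sum_wsq_boolRestrict a K)
    (by rw [hcard, mul_comm _ (2 ^ n : ℝ)]; exact sum_sq_sum_wsq_boolRestrict_le hd K)
    (by rw [hcard]; linarith [sum_sum_wsq_sq_boolRestrict_le hd hK])
  rw [hcard] at h
  refine h.trans (Nat.cast_le.2 (card_le_card fun x hx => ?_))
  rw [mem_filter] at hx ⊢
  refine ⟨hx.1, ?_⟩
  calc ∑ j, wsq (boolRestrict a K x) j ^ 2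
      ≤ 32 * (9 ^ d) ^ 2 * ε ^ 2 * (∑ j, wsq (boolRestrict a K x) j) ^ 2 := hx.2
    _ ≤ 36 * (9 ^ d) ^ 2 * ε ^ 2 * (∑ j, wsq (boolRestrict a K x) j) ^ 2 := by gcongr; norm_num
    _ = (6 * 9 ^ d * ε) ^ 2 * (∑ j, wsq (boolRestrict a K x) j) ^ 2 := by ring

theorem random_restriction_regular_general (d : ℕ) :
    ∃ (ad γd : ℝ), 0 < γd ∧
      ∀ (ε : ℝ), 0 < ε → ε < 1 →
        ∀ (n : ℕ) (a : Finset (Fin n) → ℝ), DegLE a d → OrderedWeights a →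
          γd ≤ (1 / 2 ^ n : ℝ) * ∑ x : Fin n → Bool,
            (if Regular (restCoeff a (critIndex a ε) (fun i => pmOne (x i))) (ad * ε)
              then (1 : ℝ) else 0) := by
  refine ⟨6 * 9 ^ d, 1 / (8 * 9 ^ d), by positivity, fun ε hε _ n a hd _ => ?_⟩
  have hcount := card_div_le_card_filter_regular_boolRestrict hd hε (critIndex_spec a ε)
  rw [natCast_card_filter] at hcount
  calc 1 / (8 * 9 ^ d) = 1 / 2 ^ n * (2 ^ n / (8 * 9 ^ d) : ℝ) := by field_simp
    _ ≤ _ := by gcongr; exact hcount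

/-- Lemma 5.1: for each `d ≥ 1` there are constants `a_d` and `γ_d > 0`
such that for any multilinear polynomial of degree at most `d` with decreasing weights and
critical index `K = K(P,ε)`, a uniformly random restriction of the first `K` variables
yields an `(a_d·ε)`-regular polynomial with probability at least `γ_d`. -/
theorem random_restriction_regular (d : ℕ) (hd : 1 ≤ d) :
    ∃ (ad γd : ℝ), 0 < γd ∧
      ∀ (ε : ℝ), 0 < ε → ε < 1 →
        ∀ (n : ℕ) (a : Finset (Fin n) → ℝ), DegLE a d → OrderedWeights a →
          γd ≤ (1 / 2 ^ n : ℝ) * ∑ x : Fin n → Bool,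
            (if Regular (restCoeff a (critIndex a ε) (fun i => pmOne (x i))) (ad * ε)
              then (1 : ℝ) else 0) :=
  random_restriction_regular_general d

end
end

section
/- For every Boolean function f : {-1,1}^n → {-1,1} with n ≥ 1, AS(f) ≤ 2·n·e · NS_{1/n}(f). -/
open Finset MeasureTheory ProbabilityTheory
open scoped Classical

noncomputable section

/-
A noise vector flipping exactly the `i`-th coordinate has probability `δ (1 - δ)^(n-1)` and
turns `x` into `x^{(i)}`; keeping only these `n` noise vectors in the average defining
`NS_δ(f)` gives `δ (1 - δ)^(n-1) AS(f) ≤ NS_δ(f)`. For `δ = 1/n` the constant is at least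
`1/(e n)`, because `(1 - 1/n)^(n-1) ≥ e⁻¹`.
-/

lemma sum_comp_le_sum_of_injective {ι κ M : Type*} [Fintype ι] [Fintype κ]
    [AddCommMonoid M] [PartialOrder M] [IsOrderedAddMonoid M] {e : ι → κ}
    (he : Function.Injective e) {g : κ → M} (hg : ∀ k, 0 ≤ g k) :
    ∑ i, g (e i) ≤ ∑ k, g k := by
  calc ∑ i, g (e i) = ∑ k ∈ univ.map ⟨e, he⟩, g k := (sum_map univ ⟨e, he⟩ g).symm
    _ ≤ ∑ k, g k := sum_le_univ_sum_of_nonneg hg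

lemma exp_neg_one_le_one_sub_inv_pow (n : ℕ) : Real.exp (-1) ≤ (1 - 1 / n : ℝ) ^ (n - 1) := by
  obtain _ | _ | m := n
  · simp
  · simp
  · have hbase : Real.exp (-(1 / (m + 1))) ≤ 1 - 1 / ((m + 1 + 1 : ℕ) : ℝ) := by
      rw [Real.exp_neg, inv_le_comm₀ (Real.exp_pos _) (by push_cast; field_simp; linarith)]
      calc (1 - 1 / ((m + 1 + 1 : ℕ) : ℝ))⁻¹ = 1 / (m + 1) + 1 := by push_cast; field_simp; ring
        _ ≤ Real.exp (1 / (m + 1)) := Real.add_one_le_exp _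
    calc Real.exp (-1) = Real.exp (-(1 / (m + 1))) ^ (m + 1) := by
          rw [← Real.exp_nat_mul]; push_cast; field_simp
      _ ≤ _ := pow_le_pow_left₀ (Real.exp_pos _).le hbase _

section

variable {n : ℕ}

lemma influence_nonneg (f : (Fin n → Bool) → Bool) (i : Fin n) : 0 ≤ influence f i :=
  mul_nonneg (by positivity) (sum_nonneg fun _ _ => by split <;> norm_num)

lemma avgSens_nonneg (f : (Fin n → Bool) → Bool) : 0 ≤ avgSens f :=
  sum_nonneg fun i _ => influence_nonneg f i

lemma prod_flip_single (δ : ℝ) (i : Fin n) :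
    ∏ k, (if decide (k = i) then δ else 1 - δ) = δ * (1 - δ) ^ (n - 1) := by
  rw [← mul_prod_erase univ _ (mem_univ i),
    prod_congr rfl fun k hk => if_neg (by simpa using ne_of_mem_erase hk)]
  simp

lemma xor_single_eq_update (x : Fin n → Bool) (i : Fin n) :
    (fun k => xor (decide (k = i)) (x k)) = Function.update x i (!x i) := by
  funext k
  by_cases h : k = i
  · subst h; simp
  · simp [h]

lemma mul_avgSens_le_noiseSens {δ : ℝ} (hδ0 : 0 ≤ δ) (hδ1 : δ ≤ 1) (f : (Fin n → Bool) → Bool) :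
    δ * (1 - δ) ^ (n - 1) * avgSens f ≤ noiseSens δ f := by
  set term : (Fin n → Bool) → (Fin n → Bool) → ℝ := fun x s =>
    (∏ i, if s i then δ else 1 - δ) * (if f x ≠ f (fun i => xor (s i) (x i)) then 1 else 0)
  have term_nonneg : ∀ x s, 0 ≤ term x s := fun x s =>
    mul_nonneg (prod_nonneg fun i _ => by split <;> linarith) (by split <;> norm_num)
  have single_injective : Function.Injective fun (i : Fin n) (k : Fin n) => decide (k = i) :=
    fun i j h => by simpa using congrFun h i
  have term_single : ∀ x i, term x (fun k => decide (k = i)) = δ * (1 - δ) ^ (n - 1) *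
      (if f x ≠ f (Function.update x i (!x i)) then 1 else 0) := by
    intro x i
    simp only [term, prod_flip_single, xor_single_eq_update]
  calc δ * (1 - δ) ^ (n - 1) * avgSens f
      = (1 / 2 ^ n : ℝ) * ∑ x, ∑ i, term x (fun k => decide (k = i)) := by
        simp only [term_single, avgSens, influence, mul_sum]
        rw [sum_comm]
        exact sum_congr rfl fun _ _ => sum_congr rfl fun _ _ => by ring
    _ ≤ noiseSens δ f := by
        refine mul_le_mul_of_nonneg_left (sum_le_sum fun x _ => ?_) (by positivity)
        exact sum_comp_le_sum_of_injective single_injective (term_nonneg x)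

end

/-- Lemma 7.1: for every Boolean function `f` on `{-1,1}^n`,
`AS(f) ≤ 2·n·e·NS_{1/n}(f)`. -/
theorem avgSens_le_noiseSens (n : ℕ) (hn : 1 ≤ n) (f : (Fin n → Bool) → Bool) :
    avgSens f ≤ 2 * (n : ℝ) * Real.exp 1 * noiseSens (1 / (n : ℝ)) f := by
  have hn0 : (0 : ℝ) < n := by exact_mod_cast hn
  have hδ1 : 1 / (n : ℝ) ≤ 1 := by rw [div_le_one hn0]; exact_mod_cast hn
  set c : ℝ := 1 / n * (1 - 1 / n) ^ (n - 1) with hc_def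
  have hc0 : 0 ≤ c := mul_nonneg (by positivity) (pow_nonneg (by linarith) _)
  have key : c * avgSens f ≤ noiseSens (1 / (n : ℝ)) f :=
    mul_avgSens_le_noiseSens (by positivity) hδ1 f
  have hc : 1 ≤ n * Real.exp 1 * c := by
    calc (1 : ℝ) = Real.exp 1 * Real.exp (-1) := by rw [← Real.exp_add]; simp
      _ ≤ Real.exp 1 * (1 - 1 / n) ^ (n - 1) := by
        gcongr; exact exp_neg_one_le_one_sub_inv_pow n
      _ = n * Real.exp 1 * c := by rw [hc_def]; field_simp
  have hAS := avgSens_nonneg f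
  have hNS : 0 ≤ noiseSens (1 / (n : ℝ)) f := (mul_nonneg hc0 hAS).trans key
  calc avgSens f ≤ n * Real.exp 1 * c * avgSens f := le_mul_of_one_le_left hAS hc
    _ = n * Real.exp 1 * (c * avgSens f) := by ring
    _ ≤ n * Real.exp 1 * noiseSens (1 / (n : ℝ)) f := by gcongr
    _ ≤ 2 * n * Real.exp 1 * noiseSens (1 / (n : ℝ)) f := by
        linarith [mul_nonneg (mul_nonneg hn0.le (Real.exp_pos 1).le) hNS]
end
end
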